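/- arXiv:math/0510218 — 2 statements merged into one kernel-verified Lean document; each statement's English description precedes it below -/
import Mathlib

section
/- Let F = MonoidAlgebra ℚ (FreeMonoid ℕ) with the three bilinear operations ≺, ∘, ≻ defined on basis words by Loday–Ronco's max-letter rule. Then for all x, y, z ∈ F, (x ∘ y) ≺ z = x ∘ (y ≺ z). -/
/-- The right operation `≻` of the Loday–Ronco dendriform trialgebra structure on
noncommutative polynomials: on basis words, `u ≻ v = uv` if `u, v` are nonempty and
`max u < max v`, and `0` otherwise; extended bilinearly. -/
noncomputable def trSucc {α : Type*} [LinearOrder α]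
    (x y : MonoidAlgebra ℚ (FreeMonoid α)) : MonoidAlgebra ℚ (FreeMonoid α) :=
  x.coeff.sum fun u a => y.coeff.sum fun v b =>
    if u.toList ≠ [] ∧ v.toList ≠ [] ∧ u.toList.maximum < v.toList.maximum
    then MonoidAlgebra.single (u * v) (a * b) else 0

/-- The middle operation `∘`: on basis words, `u ∘ v = uv` if `u, v` are nonempty and
`max u = max v`, and `0` otherwise; extended bilinearly. -/
noncomputable def trCirc {α : Type*} [LinearOrder α]
    (x y : MonoidAlgebra ℚ (FreeMonoid α)) : MonoidAlgebra ℚ (FreeMonoid α) :=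
  x.coeff.sum fun u a => y.coeff.sum fun v b =>
    if u.toList ≠ [] ∧ v.toList ≠ [] ∧ u.toList.maximum = v.toList.maximum
    then MonoidAlgebra.single (u * v) (a * b) else 0

/-- The left operation `≺`: on basis words, `u ≺ v = uv` if `u, v` are nonempty and
`max u > max v`, and `0` otherwise; extended bilinearly. -/
noncomputable def trPrec {α : Type*} [LinearOrder α]
    (x y : MonoidAlgebra ℚ (FreeMonoid α)) : MonoidAlgebra ℚ (FreeMonoid α) :=
  x.coeff.sum fun u a => y.coeff.sum fun v b =>
    if u.toList ≠ [] ∧ v.toList ≠ [] ∧ v.toList.maximum < u.toList.maximum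
    then MonoidAlgebra.single (u * v) (a * b) else 0

/-!
All three operations are instances of one bilinear "restricted product" on `k[M]`, which multiplies
basis elements `u, v` when a relation `P u v` holds and kills them otherwise. For such products,
`(x ⋆_P y) ⋆_Q z = x ⋆_S (y ⋆_R z)` reduces to basis elements, i.e. to the equivalence
`P u v ∧ Q (uv) w ↔ R v w ∧ S u (vw)`. For `∘` and `≺` both sides say
`max u = max v > max w`, because `max (uv) = max u ⊔ max v` and `max (vw) = max v ⊔ max w`.
-/

namespace MonoidAlgebra

variable {k M : Type*} [Semiring k] [Monoid M]

noncomputable def restrictedMul (P : M → M → Prop) [DecidableRel P] (x y : MonoidAlgebra k M) :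
    MonoidAlgebra k M :=
  x.coeff.sum fun u a => y.coeff.sum fun v b => if P u v then single (u * v) (a * b) else 0

variable (P : M → M → Prop) [DecidableRel P]

@[simp]
lemma restrictedMul_zero_left (y : MonoidAlgebra k M) : restrictedMul P 0 y = 0 := by
  simp [restrictedMul]

@[simp]
lemma restrictedMul_zero_right (x : MonoidAlgebra k M) : restrictedMul P x 0 = 0 := by
  simp [restrictedMul]

lemma restrictedMul_add_left (x x' y : MonoidAlgebra k M) :
    restrictedMul P (x + x') y = restrictedMul P x y + restrictedMul P x' y := by
  refine Finsupp.sum_add_index' (fun u => by simp) fun u a a' => ?_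
  rw [← Finsupp.sum_add]
  refine Finsupp.sum_congr fun v _ => ?_
  split_ifs <;> simp [add_mul, single_add]

lemma restrictedMul_add_right (x y y' : MonoidAlgebra k M) :
    restrictedMul P x (y + y') = restrictedMul P x y + restrictedMul P x y' := by
  rw [restrictedMul, restrictedMul, restrictedMul, ← Finsupp.sum_add]
  refine Finsupp.sum_congr fun u _ => Finsupp.sum_add_index' (fun v => by simp) fun v b b' => ?_
  split_ifs <;> simp [mul_add, single_add]

lemma restrictedMul_single_single (u v : M) (a b : k) :
    restrictedMul P (single u a) (single v b) =
      if P u v then single (u * v) (a * b) else 0 := by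
  simp [restrictedMul]

lemma restrictedMul_assoc_of_iff {P Q R S : M → M → Prop} [DecidableRel P] [DecidableRel Q]
    [DecidableRel R] [DecidableRel S]
    (h : ∀ u v w, P u v ∧ Q (u * v) w ↔ R v w ∧ S u (v * w)) (x y z : MonoidAlgebra k M) :
    restrictedMul Q (restrictedMul P x y) z = restrictedMul S x (restrictedMul R y z) := by
  induction x using MonoidAlgebra.induction_linear with
  | zero => simp
  | add x x' hx hx' => simp only [restrictedMul_add_left, hx, hx']
  | single u a =>
    induction y using MonoidAlgebra.induction_linear with
    | zero => simp
    | add y y' hy hy' => simp only [restrictedMul_add_left, restrictedMul_add_right, hy, hy']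
    | single v b =>
      induction z using MonoidAlgebra.induction_linear with
      | zero => simp
      | add z z' hz hz' => simp only [restrictedMul_add_right, hz, hz']
      | single w c =>
        simp only [restrictedMul_single_single, apply_ite (restrictedMul Q · (single w c)),
          apply_ite (restrictedMul S (single u a)), restrictedMul_zero_left,
          restrictedMul_zero_right, ← ite_and, h, mul_assoc]

end MonoidAlgebra

lemma circ_prec_condition_iff {α : Type*} [LinearOrder α] (l₁ l₂ l₃ : List α) :
    ((l₁ ≠ [] ∧ l₂ ≠ [] ∧ l₁.maximum = l₂.maximum) ∧
        (l₁ ++ l₂ ≠ [] ∧ l₃ ≠ [] ∧ l₃.maximum < (l₁ ++ l₂).maximum)) ↔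
      ((l₂ ≠ [] ∧ l₃ ≠ [] ∧ l₃.maximum < l₂.maximum) ∧
        (l₁ ≠ [] ∧ l₂ ++ l₃ ≠ [] ∧ l₁.maximum = (l₂ ++ l₃).maximum)) := by
  simp only [List.maximum_append, ne_eq, List.append_eq_nil_iff]
  constructor
  · rintro ⟨⟨h₁, h₂, heq⟩, -, h₃, hlt⟩
    rw [heq, max_self] at hlt
    exact ⟨⟨h₂, h₃, hlt⟩, h₁, by tauto, by rw [heq, max_eq_left hlt.le]⟩
  · rintro ⟨⟨h₂, h₃, hlt⟩, h₁, -, heq⟩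
    rw [max_eq_left hlt.le] at heq
    exact ⟨⟨h₁, h₂, heq⟩, by tauto, h₃, by rwa [heq, max_self]⟩

/-- Dendriform trialgebra axiom: `(x ∘ y) ≺ z = x ∘ (y ≺ z)`. -/
theorem circ_prec (x y z : MonoidAlgebra ℚ (FreeMonoid ℕ)) :
    trPrec (trCirc x y) z = trCirc x (trPrec y z) :=
  MonoidAlgebra.restrictedMul_assoc_of_iff (fun u v w => by
    simpa only [FreeMonoid.toList_mul] using circ_prec_condition_iff u.toList v.toList w.toList)
    x y z
end

section
/- Fix N ≥ 1 and work in MonoidAlgebra ℚ (FreeMonoid (Fin N)) equipped with the bilinear operation ∘ defined on basis words by the max-letter rule. For any two nonempty packed words u and v, M_u ∘ M_v = Σ_w M_w, where the sum ranges over all packed words w of length |u| + |v| such that the prefix of w of length |u| packs to u, the suffix of w of length |v| packs to v, and the greatest letter of w occurs both among the first |u| positions and among the last |v| positions of w. Hence the span of the M_u is closed under ∘, and together with the analogous statements for ≺ and ≻, NCQSym is a sub-(dendriform trialgebra). -/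
/-!
`M_u ∘ M_v` is the sum of the concatenations `fg` over words `f`, `g` with `pack f = u`,
`pack g = v` and `max f = max g`. Concatenation is a bijection from pairs `(f, g)` onto words of
length `|u| + |v|`, and the conditions on `(f, g)` only depend on `pack (fg)`: packing is
invariant under `rank (fg)`, an order embedding on the letters of `fg`, so the two halves of
`pack (fg)` pack to `pack f` and `pack g`, and the greatest letter of `pack (fg)` occurs in both
halves iff `max f = max g`. Grouping the words `fg` by their packed word gives `Σ_w M_w`.
-/

/-- The rank of the letter `x` in the word `w`: one plus the number of distinct letters
of `w` smaller than `x`. -/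
def rank (w : List ℕ) (x : ℕ) : ℕ := ((w.filter (· < x)).dedup).length + 1

/-- The packed word of a word `w`: if the distinct letters occurring in `w` are
`b₁ < b₂ < … < b_k`, each occurrence of `b_j` is replaced by `j`. -/
def pack (w : List ℕ) : List ℕ := w.map (rank w)

/-- For a packed word `u`, the element `M_u` of `MonoidAlgebra ℚ (FreeMonoid (Fin N))`:
the sum of all words `w` over the alphabet `Fin N` (identified with `{1 < 2 < … < N}`)
whose packed word is `u`. -/
noncomputable def Mword (N : ℕ) (u : List ℕ) : MonoidAlgebra ℚ (FreeMonoid (Fin N)) :=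
  ∑ f : Fin u.length → Fin N,
    if pack ((List.ofFn f).map (fun i => (i : ℕ) + 1)) = u
    then MonoidAlgebra.single (FreeMonoid.ofList (List.ofFn f)) (1 : ℚ) else 0

/-- The (finite) set of all packed words of length `n`; a packed word of length `n`
has all its letters in `{1, …, n}`. -/
noncomputable def packedWords (n : ℕ) : Finset (List ℕ) :=
  ((Finset.univ : Finset (Fin n → Fin (n + 1))).image
    (fun f => (List.ofFn f).map (fun i : Fin (n + 1) => (i : ℕ)))).filter (fun w => pack w = w)

section Pack

open Finset

lemma rank_eq_card_filter (w : List ℕ) (x : ℕ) :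
    rank w x = #{y ∈ w.toFinset | y < x} + 1 := by
  rw [rank, ← List.card_toFinset, List.toFinset_filter]
  simp only [decide_eq_true_eq]

lemma rank_lt_rank {w : List ℕ} {x y : ℕ} (hx : x ∈ w) (hxy : x < y) :
    rank w x < rank w y := by
  rw [rank_eq_card_filter, rank_eq_card_filter, add_lt_add_iff_right]
  refine Finset.card_lt_card ⟨Finset.monotone_filter_right _ fun z _ hz => hz.trans hxy, ?_⟩
  intro h
  simpa using h (by simpa using ⟨hx, hxy⟩ : x ∈ {y ∈ w.toFinset | y < _})

lemma strictMonoOn_rank (w : List ℕ) : StrictMonoOn (rank w) {x | x ∈ w} :=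
  fun _ hx _ _ hxy => rank_lt_rank hx hxy

lemma rank_le_length {w : List ℕ} {x : ℕ} (hx : x ∈ w) : rank w x ≤ w.length := by
  rw [rank_eq_card_filter, Nat.add_one_le_iff]
  calc #{y ∈ w.toFinset | y < x} < #w.toFinset :=
        Finset.card_lt_card (Finset.filter_ssubset.2 ⟨x, by simpa using hx, lt_irrefl x⟩)
    _ ≤ w.length := List.toFinset_card_le w

lemma rank_map_of_strictMonoOn {φ : ℕ → ℕ} {l : List ℕ} (hφ : StrictMonoOn φ {x | x ∈ l})
    {x : ℕ} (hx : x ∈ l) : rank (l.map φ) (φ x) = rank l x := by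
  have himage : (l.map φ).toFinset = l.toFinset.image φ := by ext; simp
  rw [rank_eq_card_filter, rank_eq_card_filter, himage, Finset.filter_image]
  congr 1
  rw [Finset.card_image_of_injOn (hφ.injOn.mono fun y hy => by simp_all)]
  congr 1
  ext y
  simp only [Finset.mem_filter, List.mem_toFinset, and_congr_right_iff]
  exact fun hy => hφ.lt_iff_lt hy hx

lemma pack_map_of_strictMonoOn {φ : ℕ → ℕ} {l : List ℕ} (hφ : StrictMonoOn φ {x | x ∈ l}) :
    pack (l.map φ) = pack l := by
  rw [pack, pack, List.map_map]
  exact List.map_congr_left fun x hx => rank_map_of_strictMonoOn hφ hx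

lemma pack_map_rank_of_subset {l w : List ℕ} (h : l ⊆ w) : pack (l.map (rank w)) = pack l :=
  pack_map_of_strictMonoOn ((strictMonoOn_rank w).mono fun _ hx => h hx)

lemma pack_pack (w : List ℕ) : pack (pack w) = pack w :=
  pack_map_rank_of_subset (List.Subset.refl w)

lemma mem_packedWords {n : ℕ} {w : List ℕ} :
    w ∈ packedWords n ↔ w.length = n ∧ pack w = w := by
  simp only [packedWords, Finset.mem_filter, Finset.mem_image, Finset.mem_univ, true_and,
    and_congr_left_iff]
  intro hw
  constructor
  · rintro ⟨f, rfl⟩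
    simp
  · rintro rfl
    have hlt (i : Fin w.length) : w[i] < w.length + 1 := by
      have hi : w[i] ∈ pack w := by rw [hw]; exact List.getElem_mem _
      obtain ⟨x, hx, hxi⟩ := List.mem_map.1 hi
      exact Nat.lt_succ_of_le (hxi ▸ rank_le_length hx)
    exact ⟨fun i => ⟨w[i], hlt i⟩, List.ext_getElem (by simp) fun i _ _ => by simp⟩

end Pack

section Maximum

variable {α β : Type*} [LinearOrder α] [LinearOrder β]

lemma List.maximum_map_of_monotoneOn {φ : α → β} {s : Set α} (hφ : MonotoneOn φ s)
    {l : List α} (hl : ∀ x ∈ l, x ∈ s) : (l.map φ).maximum = l.maximum.map φ := by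
  rcases eq_or_ne l [] with rfl | hne
  · rfl
  obtain ⟨m, hm⟩ := WithBot.ne_bot_iff_exists.1 (List.maximum_ne_bot_of_ne_nil hne)
  obtain ⟨hml, hle⟩ := List.maximum_eq_coe_iff.1 hm.symm
  rw [← hm, WithBot.map_coe, List.maximum_eq_coe_iff]
  simp only [List.mem_map, forall_exists_index, and_imp, forall_apply_eq_imp_iff₂]
  exact ⟨⟨m, hml, rfl⟩, fun x hx => hφ (hl x hx) (hl m hml) (hle x hx)⟩

lemma List.maximum_map_eq_maximum_map_iff {φ : α → β} {s : Set α} (hφ : StrictMonoOn φ s)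
    {a b : List α} (ha : ∀ x ∈ a, x ∈ s) (hb : ∀ x ∈ b, x ∈ s) :
    (a.map φ).maximum = (b.map φ).maximum ↔ a.maximum = b.maximum := by
  rw [List.maximum_map_of_monotoneOn hφ.monotoneOn ha,
    List.maximum_map_of_monotoneOn hφ.monotoneOn hb]
  refine ⟨fun h => ?_, congrArg _⟩
  have hmem {l : List α} (hl : ∀ x ∈ l, x ∈ s) : ∀ m : α, l.maximum = m → m ∈ s :=
    fun m hm => hl m (List.maximum_mem hm)
  cases hma : a.maximum <;> cases hmb : b.maximum <;> simp_all
  exact hφ.injOn (hmem ha _ hma) (hmem hb _ hmb) h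

lemma List.foldr_max_mem_iff [OrderBot α] {l w : List α} (hl : l ⊆ w) (hw : w ≠ []) :
    w.foldr max ⊥ ∈ l ↔ l.maximum = w.maximum := by
  rw [← List.foldr_max_of_ne_nil hw, List.maximum_eq_coe_iff]
  exact ⟨fun h => ⟨h, fun x hx => List.le_max_of_le (hl hx) le_rfl⟩, And.left⟩

lemma List.foldr_max_append_mem_iff [OrderBot α] (a b : List α) :
    (a ++ b).foldr max ⊥ ∈ a ∧ (a ++ b).foldr max ⊥ ∈ b ↔
      a ≠ [] ∧ b ≠ [] ∧ a.maximum = b.maximum := by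
  rcases eq_or_ne a [] with rfl | ha
  · simp
  rcases eq_or_ne b [] with rfl | hb
  · simp
  have hab : a ++ b ≠ [] := by simp [ha]
  rw [List.foldr_max_mem_iff (List.subset_append_left a b) hab,
    List.foldr_max_mem_iff (List.subset_append_right a b) hab, List.maximum_append]
  simp only [ne_eq, ha, hb, not_false_eq_true, true_and]
  constructor
  · rintro ⟨h₁, h₂⟩
    exact h₁.trans h₂.symm
  · intro h
    simp [h]

end Maximum

section PackAppend

variable (a b : List ℕ)

lemma pack_append : pack (a ++ b) = a.map (rank (a ++ b)) ++ b.map (rank (a ++ b)) :=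
  List.map_append

lemma pack_take_pack_append : pack ((pack (a ++ b)).take a.length) = pack a := by
  rw [pack_append, List.take_left' (List.length_map _)]
  exact pack_map_rank_of_subset (List.subset_append_left a b)

lemma pack_drop_pack_append : pack ((pack (a ++ b)).drop a.length) = pack b := by
  rw [pack_append, List.drop_left' (List.length_map _)]
  exact pack_map_rank_of_subset (List.subset_append_right a b)

lemma foldr_max_pack_append_mem_iff :
    (pack (a ++ b)).foldr max 0 ∈ (pack (a ++ b)).take a.length ∧
      (pack (a ++ b)).foldr max 0 ∈ (pack (a ++ b)).drop a.length ↔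
      a ≠ [] ∧ b ≠ [] ∧ a.maximum = b.maximum := by
  rw [pack_append, List.take_left' (List.length_map _), List.drop_left' (List.length_map _)]
  refine (List.foldr_max_append_mem_iff _ _).trans ?_
  rw [List.maximum_map_eq_maximum_map_iff (strictMonoOn_rank (a ++ b))
    (fun _ => List.mem_append_left b) (fun _ => List.mem_append_right a)]
  simp only [ne_eq, List.map_eq_nil_iff]

end PackAppend

section TrCirc

variable {α : Type*} [LinearOrder α]

lemma trCirc_add_left (x x' y : MonoidAlgebra ℚ (FreeMonoid α)) :
    trCirc (x + x') y = trCirc x y + trCirc x' y := by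
  unfold trCirc
  rw [MonoidAlgebra.coeff_add, Finsupp.sum_add_index']
  · intro u
    exact Finset.sum_eq_zero fun v _ => by simp
  · intro u a a'
    rw [← Finsupp.sum_add]
    refine Finsupp.sum_congr fun v _ => ?_
    split_ifs <;> simp [add_mul]

lemma trCirc_add_right (x y y' : MonoidAlgebra ℚ (FreeMonoid α)) :
    trCirc x (y + y') = trCirc x y + trCirc x y' := by
  unfold trCirc
  rw [MonoidAlgebra.coeff_add, ← Finsupp.sum_add]
  refine Finsupp.sum_congr fun u _ => Finsupp.sum_add_index' (fun v => by simp) fun v b b' => ?_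
  split_ifs <;> simp [mul_add]

lemma trCirc_zero_left (y : MonoidAlgebra ℚ (FreeMonoid α)) : trCirc 0 y = 0 :=
  map_zero (AddMonoidHom.mk' (trCirc · y) fun x x' => trCirc_add_left x x' y)

lemma trCirc_zero_right (x : MonoidAlgebra ℚ (FreeMonoid α)) : trCirc x 0 = 0 :=
  map_zero (AddMonoidHom.mk' (trCirc x) (trCirc_add_right x))

lemma trCirc_sum_left {ι : Type*} (s : Finset ι) (x : ι → MonoidAlgebra ℚ (FreeMonoid α))
    (y : MonoidAlgebra ℚ (FreeMonoid α)) :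
    trCirc (∑ i ∈ s, x i) y = ∑ i ∈ s, trCirc (x i) y :=
  map_sum (AddMonoidHom.mk' (trCirc · y) fun x x' => trCirc_add_left x x' y) x s

lemma trCirc_sum_right {ι : Type*} (s : Finset ι) (x : MonoidAlgebra ℚ (FreeMonoid α))
    (y : ι → MonoidAlgebra ℚ (FreeMonoid α)) :
    trCirc x (∑ i ∈ s, y i) = ∑ i ∈ s, trCirc x (y i) :=
  map_sum (AddMonoidHom.mk' (trCirc x) (trCirc_add_right x)) y s

lemma trCirc_single_single (p q : FreeMonoid α) (r s : ℚ) :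
    trCirc (MonoidAlgebra.single p r) (MonoidAlgebra.single q s) =
      if p.toList ≠ [] ∧ q.toList ≠ [] ∧ p.toList.maximum = q.toList.maximum
      then MonoidAlgebra.single (p * q) (r * s) else 0 := by
  unfold trCirc
  rw [MonoidAlgebra.coeff_single, Finsupp.sum_single_index, MonoidAlgebra.coeff_single,
    Finsupp.sum_single_index]
  · simp
  · exact Finset.sum_eq_zero fun v _ => by simp

end TrCirc

lemma pack_append_mem_filter_iff {a b u v : List ℕ} (ha : a.length = u.length)
    (hb : b.length = v.length) :
    pack (a ++ b) ∈ (packedWords (u.length + v.length)).filter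
        (fun w => pack (w.take u.length) = u ∧ pack (w.drop u.length) = v ∧
          w.foldr max 0 ∈ w.take u.length ∧ w.foldr max 0 ∈ w.drop u.length) ↔
      (pack a = u ∧ pack b = v) ∧ a ≠ [] ∧ b ≠ [] ∧ a.maximum = b.maximum := by
  have hpacked : pack (a ++ b) ∈ packedWords (a.length + v.length) :=
    mem_packedWords.2 ⟨by simp [pack, hb], pack_pack _⟩
  rw [← ha, Finset.mem_filter, pack_take_pack_append, pack_drop_pack_append, ← and_assoc,
    ← and_assoc, foldr_max_pack_append_mem_iff]
  simp only [hpacked, true_and]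

section Mword

def natWord {N : ℕ} (l : List (Fin N)) : List ℕ := l.map fun i : Fin N => (i : ℕ) + 1

lemma natWord_append {N : ℕ} (l l' : List (Fin N)) :
    natWord (l ++ l') = natWord l ++ natWord l' :=
  List.map_append

lemma natWord_ne_nil_iff {N : ℕ} {l : List (Fin N)} : natWord l ≠ [] ↔ l ≠ [] := by
  simp [natWord]

lemma maximum_natWord_eq_iff {N : ℕ} {l l' : List (Fin N)} :
    (natWord l).maximum = (natWord l').maximum ↔ l.maximum = l'.maximum :=
  List.maximum_map_eq_maximum_map_iff (φ := fun i : Fin N => (i : ℕ) + 1) (s := Set.univ)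
    (fun _ _ _ _ h => Nat.add_lt_add_right h 1) (fun _ _ => trivial) fun _ _ => trivial

lemma Mword_eq_sum {N n : ℕ} {u : List ℕ} (hu : u.length = n) :
    Mword N u = ∑ f : Fin n → Fin N, if pack (natWord (List.ofFn f)) = u
      then MonoidAlgebra.single (FreeMonoid.ofList (List.ofFn f)) 1 else 0 := by
  subst hu
  -- `Mword` elaborates `(i : ℕ)` as a monadic coercion of the whole list `List.ofFn f`.
  simp only [Mword, natWord, List.pure_def, List.bind_eq_flatMap, ← List.map_eq_flatMap,
    List.map_map]
  rfl

end Mword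

lemma sum_Mword_eq_sum_ite {N n : ℕ} {S : Finset (List ℕ)} (hS : ∀ w ∈ S, w.length = n) :
    ∑ w ∈ S, Mword N w = ∑ f : Fin n → Fin N, if pack (natWord (List.ofFn f)) ∈ S
      then MonoidAlgebra.single (FreeMonoid.ofList (List.ofFn f)) 1 else 0 := by
  rw [Finset.sum_congr rfl fun w hw => Mword_eq_sum (hS w hw), Finset.sum_comm]
  exact Finset.sum_congr rfl fun f _ => Finset.sum_ite_eq S _ _

lemma trCirc_Mword_Mword (N : ℕ) (u v : List ℕ) :
    trCirc (Mword N u) (Mword N v) =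
      ∑ f : Fin u.length → Fin N, ∑ g : Fin v.length → Fin N,
        if (pack (natWord (List.ofFn f)) = u ∧ pack (natWord (List.ofFn g)) = v) ∧
            List.ofFn f ≠ [] ∧ List.ofFn g ≠ [] ∧ (List.ofFn f).maximum = (List.ofFn g).maximum
        then MonoidAlgebra.single (FreeMonoid.ofList (List.ofFn f ++ List.ofFn g)) 1 else 0 := by
  rw [Mword_eq_sum rfl, Mword_eq_sum rfl, trCirc_sum_left]
  refine Finset.sum_congr rfl fun f _ => ?_
  rw [trCirc_sum_right]
  refine Finset.sum_congr rfl fun g _ => ?_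
  split_ifs <;> simp_all [trCirc_single_single, trCirc_zero_left, trCirc_zero_right]

theorem Mword_circ_general (N : ℕ) (u v : List ℕ) :
    trCirc (Mword N u) (Mword N v) =
      ∑ w ∈ (packedWords (u.length + v.length)).filter
        (fun w => pack (w.take u.length) = u ∧ pack (w.drop u.length) = v ∧
          w.foldr max 0 ∈ w.take u.length ∧ w.foldr max 0 ∈ w.drop u.length),
        Mword N w := by
  rw [trCirc_Mword_Mword, sum_Mword_eq_sum_ite fun w hw =>
    (mem_packedWords.1 (Finset.mem_filter.1 hw).1).1, ← Fintype.sum_prod_type']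
  refine Fintype.sum_equiv (Fin.appendEquiv _ _) _ _ fun ⟨f, g⟩ => ?_
  have happend : List.ofFn (Fin.appendEquiv _ _ (f, g)) = List.ofFn f ++ List.ofFn g :=
    List.ofFn_fin_append f g
  have hmem := pack_append_mem_filter_iff (a := natWord (List.ofFn f))
    (b := natWord (List.ofFn g)) (u := u) (v := v) (by simp [natWord]) (by simp [natWord])
  simp only [happend, natWord_append, hmem, natWord_ne_nil_iff, maximum_natWord_eq_iff]

/-- Formula for the middle product `∘` on `NCQSym`: for nonempty packed words `u` and `v`,
`M_u ∘ M_v = Σ_w M_w`, where `w` ranges over all packed words of length `|u| + |v|` whose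
prefix of length `|u|` packs to `u`, whose suffix of length `|v|` packs to `v`, and whose
greatest letter occurs both among the first `|u|` positions and among the last `|v|`
positions. Hence the span of the `M_u` is closed under `∘`. -/
theorem Mword_circ (N : ℕ) (hN : 1 ≤ N) (u v : List ℕ) (hu : pack u = u) (hv : pack v = v)
    (hu' : u ≠ []) (hv' : v ≠ []) :
    trCirc (Mword N u) (Mword N v) =
      ∑ w ∈ (packedWords (u.length + v.length)).filter
        (fun w => pack (w.take u.length) = u ∧ pack (w.drop u.length) = v ∧
          w.foldr max 0 ∈ w.take u.length ∧ w.foldr max 0 ∈ w.drop u.length),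
        Mword N w :=
  Mword_circ_general N u v
end
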